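/- Fix ρ ∈ (0,1], ρ̄ = √(1−ρ²), and V ∈ ℝ. Let Z be standard normal, and let U be a random variable independent of Z whose law is that of a standard normal conditioned to be at most V (i.e., U has density (1/(1−Q(V)))·(1/√(2π))·e^{−x²/2} on (−∞, V] and 0 above V). Let 𝐯 be any standard normal random variable. Then for every a ∈ ℝ: P(a < ρ·U + ρ̄·Z) ≥ P(a < 𝐯) − Q(V), where Q(x) = ∫_x^∞ (1/√(2π)) e^{−t²/2} dt. -/

import Mathlib

/-!
If `U` were an untruncated standard normal, `ρ U + ρ̄ Z` would be standard normal, since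
`ρ² + ρ̄² = 1` and Gaussian laws are stable under convolution. So `P(a < W)` is the mass of a
half-plane under `γ ⊗ γ`, and conditioning the first factor on `{u ≤ V}` lowers the mass of any
event by at most `γ(u > V) = Q(V)` (law of total probability).
-/

open MeasureTheory ProbabilityTheory

/-- The Gaussian tail function `Q(x) = ∫_x^∞ (1/√(2π)) e^{−t²/2} dt`. -/
noncomputable def gaussQ (x : ℝ) : ℝ :=
  ∫ t in Set.Ioi x, (Real.sqrt (2 * Real.pi))⁻¹ * Real.exp (-t ^ 2 / 2)

open Set NNReal

lemma gaussQ_eq_measureReal_Ioi (x : ℝ) : gaussQ x = (gaussianReal 0 1).real (Ioi x) := by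
  rw [measureReal_def, gaussianReal_apply_eq_integral 0 one_ne_zero,
    ENNReal.toReal_ofReal (integral_nonneg fun t => gaussianPDFReal_nonneg _ _ _)]
  simp [gaussQ, gaussianPDFReal]

lemma ofReal_one_sub_gaussQ (x : ℝ) :
    ENNReal.ofReal (1 - gaussQ x) = gaussianReal 0 1 (Iic x) := by
  rw [gaussQ_eq_measureReal_Ioi, ← probReal_compl_eq_one_sub measurableSet_Ioi, compl_Ioi,
    ofReal_measureReal]

lemma map_linearCombination_gaussianReal_prod (a b m₁ m₂ : ℝ) (v₁ v₂ : ℝ≥0) :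
    ((gaussianReal m₁ v₁).prod (gaussianReal m₂ v₂)).map (fun p => a * p.1 + b * p.2) =
      gaussianReal (a * m₁ + b * m₂)
        (⟨a ^ 2, sq_nonneg a⟩ * v₁ + ⟨b ^ 2, sq_nonneg b⟩ * v₂) := by
  have hsplit : (fun p : ℝ × ℝ => a * p.1 + b * p.2) =
      (fun p => p.1 + p.2) ∘ Prod.map (a * ·) (b * ·) := rfl
  rw [hsplit, ← Measure.map_map (by fun_prop) (by fun_prop),
    ← Measure.map_prod_map _ _ (by fun_prop) (by fun_prop), gaussianReal_map_const_mul,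
    gaussianReal_map_const_mul, ← gaussianReal_conv_gaussianReal]
  rfl

lemma map_linearCombination_stdGaussian_prod {a b : ℝ} (hab : a ^ 2 + b ^ 2 = 1) :
    ((gaussianReal 0 1).prod (gaussianReal 0 1)).map (fun p => a * p.1 + b * p.2) =
      gaussianReal 0 1 := by
  rw [map_linearCombination_gaussianReal_prod]
  congr 1
  · ring
  · apply NNReal.eq
    change a ^ 2 * 1 + b ^ 2 * 1 = 1
    linear_combination hab

section ConditioningFirstFactor

variable {α β : Type*} [MeasurableSpace α] [MeasurableSpace β]

lemma cond_prod_univ (μ : Measure α) (ν : Measure β) [SFinite μ] [IsProbabilityMeasure ν]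
    (s : Set α) :
    (μ.prod ν)[|s ×ˢ univ] = μ[|s].prod ν := by
  rw [ProbabilityTheory.cond, ProbabilityTheory.cond, Measure.prod_smul_left,
    Measure.restrict_prod_eq_prod_univ, Measure.prod_prod, measure_univ, mul_one]

lemma measure_le_cond_add_measure_compl (μ : Measure α) [IsProbabilityMeasure μ] {s : Set α}
    (hs : MeasurableSet s) (t : Set α) : μ t ≤ μ[t|s] + μ sᶜ :=
  calc μ t = μ[t|s] * μ s + μ[t|sᶜ] * μ sᶜ := (cond_add_cond_compl_eq hs μ).symm
    _ ≤ μ[t|s] * 1 + 1 * μ sᶜ := by gcongr <;> exact prob_le_one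
    _ = μ[t|s] + μ sᶜ := by rw [mul_one, one_mul]

lemma measure_prod_le_cond_prod_add_measure_compl (μ : Measure α) (ν : Measure β)
    [IsProbabilityMeasure μ] [IsProbabilityMeasure ν] {s : Set α} (hs : MeasurableSet s)
    (t : Set (α × β)) : μ.prod ν t ≤ μ[|s].prod ν t + μ sᶜ := by
  have hprod := measure_le_cond_add_measure_compl (μ.prod ν) (hs.prod MeasurableSet.univ) t
  rwa [cond_prod_univ, compl_prod_eq_union, compl_univ, prod_empty, union_empty,
    Measure.prod_prod, measure_univ, mul_one] at hprod

end ConditioningFirstFactor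

/-- **Lemma 2.**
Let `Z` be standard normal and `U` independent of `Z` with the law of a
standard normal conditioned to be at most `V` (upper-truncated standard
Gaussian). Let `W` be any standard normal random variable. Then for every
`a ∈ ℝ`, `P(a < ρ·U + ρ̄·Z) ≥ P(a < W) − Q(V)`. -/
theorem truncated_gaussian_tail_lower_bound
    {Ω : Type*} [MeasureSpace Ω] [IsProbabilityMeasure (ℙ : Measure Ω)]
    (ρ : ℝ) (hρ : ρ ∈ Set.Ioc (0 : ℝ) 1) (V : ℝ)
    (Z U W : Ω → ℝ)
    (hZm : Measurable Z) (hUm : Measurable U) (hWm : Measurable W)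
    (hZd : Measure.map Z ℙ = gaussianReal 0 1)
    (hUd : Measure.map U ℙ =
      (ENNReal.ofReal (1 - gaussQ V))⁻¹ • ((gaussianReal 0 1).restrict (Set.Iic V)))
    (hWd : Measure.map W ℙ = gaussianReal 0 1)
    (hindep : IndepFun U Z ℙ)
    (a : ℝ) :
    (ℙ {ω | a < W ω}).toReal - gaussQ V ≤
      (ℙ {ω | a < ρ * U ω + Real.sqrt (1 - ρ ^ 2) * Z ω}).toReal := by
  set γ := gaussianReal 0 1
  set c := Real.sqrt (1 - ρ ^ 2)
  have hρc : ρ ^ 2 + c ^ 2 = 1 := by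
    rw [Real.sq_sqrt (by nlinarith [hρ.1, hρ.2])]
    ring
  set f : ℝ × ℝ → ℝ := fun p => ρ * p.1 + c * p.2
  have hf : Measurable f := by fun_prop
  have hUZ : Measure.map (fun ω => (U ω, Z ω)) ℙ = γ[|Iic V].prod γ := by
    rw [(indepFun_iff_map_prod_eq_prod_map_map hUm.aemeasurable hZm.aemeasurable).1 hindep, hUd,
      hZd, ofReal_one_sub_gaussQ]
    rfl
  have hW : ℙ {ω | a < W ω} = γ (Ioi a) := by
    rw [← hWd, Measure.map_apply hWm measurableSet_Ioi]
    rfl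
  have hX : ℙ {ω | a < ρ * U ω + c * Z ω} = γ[|Iic V].prod γ (f ⁻¹' Ioi a) := by
    rw [← hUZ, Measure.map_apply (hUm.prodMk hZm) (hf measurableSet_Ioi)]
    rfl
  have htail : γ (Ioi a) ≤ ℙ {ω | a < ρ * U ω + c * Z ω} + γ (Ioi V) :=
    calc γ (Ioi a) = γ.prod γ (f ⁻¹' Ioi a) := by
          rw [← Measure.map_apply hf measurableSet_Ioi, map_linearCombination_stdGaussian_prod hρc]
      _ ≤ γ[|Iic V].prod γ (f ⁻¹' Ioi a) + γ (Iic V)ᶜ :=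
          measure_prod_le_cond_prod_add_measure_compl γ γ measurableSet_Iic _
      _ = ℙ {ω | a < ρ * U ω + c * Z ω} + γ (Ioi V) := by rw [hX, compl_Iic]
  have hreal := ENNReal.toReal_le_add htail (measure_ne_top _ _) (measure_ne_top _ _)
  rw [hW, gaussQ_eq_measureReal_Ioi, measureReal_def]
  linarith
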